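/- Conservation of discrete mass for the modified semi-discrete discontinuous Galerkin scheme: if (C_0,…,C_{N_H−1}, E, Φ) solves the semi-discrete DG scheme with the DG Poisson solver, then t ↦ ∫_0^L C_0(t,x) dx is constant in t, i.e. d/dt ∫_0^L C_0(t,x) dx = 0. -/

import Mathlib

/-!
Testing the scheme for `C_0` against `φ = 1` kills the volume term (`φ' = 0`) and the source
term (`√0 = 0`, `r_0 = 0`), so the time derivative of the mass in a cell is the flux difference
`ĝ_{0,j-1/2} - ĝ_{0,j+1/2}`. Summed over the cells this telescopes, and the periodic
identification of the end interfaces makes the boundary fluxes cancel.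
-/

open MeasureTheory Finset

noncomputable section

/-- Left (minus) one-sided limit of the piecewise polynomial with cell
polynomials `u 0, …, u (Nx−1)` at the interface `x_{i+1/2} = X i`
(interfaces `i = 0` and `i = Nx` are identified periodically). -/
def dgMinus (Nx : ℕ) (X : ℕ → ℝ) (u : ℕ → Polynomial ℝ) (i : ℕ) : ℝ :=
  if i = 0 then (u (Nx - 1)).eval (X Nx) else (u (i - 1)).eval (X i)

/-- Right (plus) one-sided limit at the interface `X i` (periodic). -/
def dgPlus (Nx : ℕ) (X : ℕ → ℝ) (u : ℕ → Polynomial ℝ) (i : ℕ) : ℝ :=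
  if i = Nx then (u 0).eval (X 0) else (u i).eval (X i)

/-- Jump `[u] = u⁺ − u⁻` at the interface `X i`. -/
def dgJump (Nx : ℕ) (X : ℕ → ℝ) (u : ℕ → Polynomial ℝ) (i : ℕ) : ℝ :=
  dgPlus Nx X u i - dgMinus Nx X u i

/-- Average `{u} = (u⁺ + u⁻)/2` at the interface `X i`. -/
def dgAvg (Nx : ℕ) (X : ℕ → ℝ) (u : ℕ → Polynomial ℝ) (i : ℕ) : ℝ :=
  (dgPlus Nx X u i + dgMinus Nx X u i) / 2

/-- Integral over the cell `I_j = (X j, X (j+1))`. -/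
def cellInt (X : ℕ → ℝ) (j : ℕ) (f : ℝ → ℝ) : ℝ :=
  ∫ x in (X j)..(X (j + 1)), f x

/-- `g_n = v_th (√(n+1) C_{n+1} + √n C_{n−1})` on each cell (the convention
`C_{−1} = 0` is handled by `√0 = 0` and truncated subtraction). -/
def dgG (vth : ℝ) (Cf : ℕ → ℕ → Polynomial ℝ) (n j : ℕ) : Polynomial ℝ :=
  vth • (Real.sqrt (n + 1) • Cf (n + 1) j + Real.sqrt n • Cf (n - 1) j)

/-- Global Lax–Friedrichs flux
`ĝ_n = (1/2)(g_n⁻ + g_n⁺ − α (C_n⁺ − C_n⁻))` with `α = v_th √N_H`. -/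
def dgGhat (vth : ℝ) (NH Nx : ℕ) (X : ℕ → ℝ) (Cf : ℕ → ℕ → Polynomial ℝ)
    (n i : ℕ) : ℝ :=
  (1 / 2) * (dgMinus Nx X (dgG vth Cf n) i + dgPlus Nx X (dgG vth Cf n) i
    - vth * Real.sqrt NH *
        (dgPlus Nx X (Cf n) i - dgMinus Nx X (Cf n) i))

/-- `Ĉ_1 = ĝ_0 / v_th`. -/
def dgC1hat (vth : ℝ) (NH Nx : ℕ) (X : ℕ → ℝ) (Cf : ℕ → ℕ → Polynomial ℝ)
    (i : ℕ) : ℝ :=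
  dgGhat vth NH Nx X Cf 0 i / vth

/-- The convective DG form
`a_n^j(g_n, φ) = −∫_{I_j} g_n φ' + ĝ_{n,j+1/2} φ(x_{j+1/2}⁻) − ĝ_{n,j−1/2} φ(x_{j−1/2}⁺)`. -/
def dgA (vth : ℝ) (NH Nx : ℕ) (X : ℕ → ℝ) (Cf : ℕ → ℕ → Polynomial ℝ)
    (n j : ℕ) (φ : Polynomial ℝ) : ℝ :=
  -(cellInt X j fun x => (dgG vth Cf n j).eval x * φ.derivative.eval x)
    + dgGhat vth NH Nx X Cf n (j + 1) * φ.eval (X (j + 1))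
    - dgGhat vth NH Nx X Cf n j * φ.eval (X j)

/-- The residual `⟨r_1^j, φ⟩`. -/
def dgR1 (vth β : ℝ) (Nx : ℕ) (X : ℕ → ℝ) (Ef Φf : ℕ → Polynomial ℝ)
    (j : ℕ) (φ : Polynomial ℝ) : ℝ :=
  -(β / (2 * vth ^ 2)) *
    ((dgJump Nx X Φf j * dgJump Nx X Ef j) * φ.eval (X j)
      + (dgJump Nx X Φf (j + 1) * dgJump Nx X Ef (j + 1)) * φ.eval (X (j + 1)))

/-- The residual `⟨r_2^j, φ⟩`. -/
def dgR2 (vth : ℝ) (NH Nx : ℕ) (X : ℕ → ℝ) (Cf : ℕ → ℕ → Polynomial ℝ)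
    (Φf : ℕ → Polynomial ℝ) (j : ℕ) (φ : Polynomial ℝ) : ℝ :=
  (1 / (Real.sqrt 2 * vth)) *
    ((dgAvg Nx X (Cf 1) j - dgC1hat vth NH Nx X Cf j) * dgJump Nx X Φf j *
        φ.eval (X j)
      + (dgAvg Nx X (Cf 1) (j + 1) - dgC1hat vth NH Nx X Cf (j + 1)) *
          dgJump Nx X Φf (j + 1) * φ.eval (X (j + 1)))

/-- The residual `⟨r_n^j, φ⟩` (zero for `n ∉ {1, 2}`). -/
def dgR (vth β : ℝ) (NH Nx : ℕ) (X : ℕ → ℝ) (Cf : ℕ → ℕ → Polynomial ℝ)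
    (Ef Φf : ℕ → Polynomial ℝ) (n j : ℕ) (φ : Polynomial ℝ) : ℝ :=
  if n = 1 then dgR1 vth β Nx X Ef Φf j φ
  else if n = 2 then dgR2 vth NH Nx X Cf Φf j φ
  else 0

/-- The source form `b_n^j(C, E, Φ, φ) = −(√n/v_th) ∫_{I_j} E C_{n−1} φ − ⟨r_n^j, φ⟩`
(for `n = 0` this is `0` since `√0 = 0` and `r_0 = 0`). -/
def dgB (vth β : ℝ) (NH Nx : ℕ) (X : ℕ → ℝ) (Cf : ℕ → ℕ → Polynomial ℝ)
    (Ef Φf : ℕ → Polynomial ℝ) (n j : ℕ) (φ : Polynomial ℝ) : ℝ :=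
  -(Real.sqrt n / vth) *
      (cellInt X j fun x => (Ef j).eval x * (Cf (n - 1) j).eval x * φ.eval x)
    - dgR vth β NH Nx X Cf Ef Φf n j φ

/-- The local DG scheme for the Poisson equation with source `C_0`, with
fluxes `Φ̂ = {Φ}` and `Ê = {E} − β [Φ]`. -/
def dgPoisson (vth ρ0 β : ℝ) (k Nx : ℕ) (X : ℕ → ℝ)
    (C0f Ef Φf : ℕ → Polynomial ℝ) : Prop :=
  ∀ j < Nx, ∀ ψ : Polynomial ℝ, ψ.natDegree ≤ k →
    ((cellInt X j fun x => (Φf j).eval x * ψ.derivative.eval x)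
        - dgAvg Nx X Φf (j + 1) * ψ.eval (X (j + 1))
        + dgAvg Nx X Φf j * ψ.eval (X j)
      = cellInt X j fun x => (Ef j).eval x * ψ.eval x)
    ∧ (-(cellInt X j fun x => (Ef j).eval x * ψ.derivative.eval x)
        + (dgAvg Nx X Ef (j + 1) - β * dgJump Nx X Φf (j + 1)) *
            ψ.eval (X (j + 1))
        - (dgAvg Nx X Ef j - β * dgJump Nx X Φf j) * ψ.eval (X j)
      = cellInt X j fun x => (vth * (C0f j).eval x - ρ0) * ψ.eval x)

/-- `∫_0^L u dx` for a piecewise polynomial `u`. -/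
def dgTotInt (Nx : ℕ) (X : ℕ → ℝ) (u : ℕ → Polynomial ℝ) : ℝ :=
  ∑ j ∈ Finset.range Nx, cellInt X j fun x => (u j).eval x

/-- The discrete total energy
`ℰ_h = (1/2) ∫_0^L [v_th³(√2 C_2 + C_0) + E²] dx + (β/2) Σ_j [Φ]_{j−1/2}²`. -/
def dgEnergy (vth β : ℝ) (Nx : ℕ) (X : ℕ → ℝ) (Cf : ℕ → ℕ → Polynomial ℝ)
    (Ef Φf : ℕ → Polynomial ℝ) : ℝ :=
  (1 / 2) * ∑ j ∈ Finset.range Nx,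
      (cellInt X j fun x =>
        vth ^ 3 * (Real.sqrt 2 * (Cf 2 j).eval x + (Cf 0 j).eval x)
          + ((Ef j).eval x) ^ 2)
    + (β / 2) * ∑ j ∈ Finset.range Nx, (dgJump Nx X Φf j) ^ 2

end

section Periodicity

variable (Nx : ℕ) (X : ℕ → ℝ) (u : ℕ → Polynomial ℝ)

theorem dgMinus_last_eq_first : dgMinus Nx X u Nx = dgMinus Nx X u 0 := by
  by_cases h : Nx = 0 <;> simp [dgMinus, h]

theorem dgPlus_last_eq_first : dgPlus Nx X u Nx = dgPlus Nx X u 0 := by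
  by_cases h : Nx = 0 <;> simp [dgPlus, h]

theorem dgGhat_last_eq_first (vth : ℝ) (NH : ℕ) (Cf : ℕ → ℕ → Polynomial ℝ) (n : ℕ) :
    dgGhat vth NH Nx X Cf n Nx = dgGhat vth NH Nx X Cf n 0 := by
  simp only [dgGhat, dgMinus_last_eq_first, dgPlus_last_eq_first]

end Periodicity

section ConstantTestFunction

variable (vth : ℝ) (NH Nx : ℕ) (X : ℕ → ℝ) (Cf : ℕ → ℕ → Polynomial ℝ)

theorem dgA_one (n j : ℕ) :
    dgA vth NH Nx X Cf n j 1 = dgGhat vth NH Nx X Cf n (j + 1) - dgGhat vth NH Nx X Cf n j := by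
  simp [dgA, cellInt]

theorem sum_dgA_one_eq_zero (n : ℕ) : ∑ j ∈ range Nx, dgA vth NH Nx X Cf n j 1 = 0 := by
  simp only [dgA_one, sum_range_sub (fun i => dgGhat vth NH Nx X Cf n i),
    dgGhat_last_eq_first, sub_self]

theorem dgB_zero_mode (β : ℝ) (Ef Φf : ℕ → Polynomial ℝ) (j : ℕ) (φ : Polynomial ℝ) :
    dgB vth β NH Nx X Cf Ef Φf 0 j φ = 0 := by
  simp [dgB, dgR]

end ConstantTestFunction

theorem dg_semidiscrete_mass_conservation_general
    (vth β : ℝ) (k Nx NH : ℕ)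
    (hNH : 3 ≤ NH)
    -- the partition `0 = x_{1/2} < … < x_{Nx+1/2} = L`
    (X : ℕ → ℝ)
    -- the numerical solution, cell by cell
    (C : ℕ → ℝ → ℕ → Polynomial ℝ) (E Φ : ℝ → ℕ → Polynomial ℝ)
    -- C¹ regularity in time
    (hC1 : ∀ n j (φ : Polynomial ℝ),
      Differentiable ℝ fun t => cellInt X j fun x => (C n t j).eval x * φ.eval x)
    -- the modified semi-discrete DG scheme
    (hScheme : ∀ t : ℝ, ∀ n < NH, ∀ j < Nx, ∀ φ : Polynomial ℝ, φ.natDegree ≤ k →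
      deriv (fun s => cellInt X j fun x => (C n s j).eval x * φ.eval x) t
        + dgA vth NH Nx X (fun m i => C m t i) n j φ
        + dgB vth β NH Nx X (fun m i => C m t i) (E t) (Φ t) n j φ = 0) :
    ∀ t : ℝ, dgTotInt Nx X (C 0 t) = dgTotInt Nx X (C 0 0) := by
  have hdiff (j : ℕ) : Differentiable ℝ fun s => cellInt X j fun x => (C 0 s j).eval x := by
    simpa only [Polynomial.eval_one, mul_one] using hC1 0 j 1
  have hcell (t : ℝ) (j : ℕ) (hj : j < Nx) :
      deriv (fun s => cellInt X j fun x => (C 0 s j).eval x) t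
        = -dgA vth NH Nx X (fun m i => C m t i) 0 j 1 := by
    have h := hScheme t 0 (by omega) j hj 1 (by simp)
    simp only [Polynomial.eval_one, mul_one, dgB_zero_mode, add_zero] at h
    linarith
  have hmass : Differentiable ℝ fun s => dgTotInt Nx X (C 0 s) :=
    Differentiable.fun_sum fun j _ => hdiff j
  refine fun t => is_const_of_deriv_eq_zero hmass (fun s => ?_) t 0
  calc deriv (fun s => dgTotInt Nx X (C 0 s)) s
      = ∑ j ∈ range Nx, deriv (fun s => cellInt X j fun x => (C 0 s j).eval x) s :=
        deriv_fun_sum fun j _ => (hdiff j).differentiableAt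
    _ = -∑ j ∈ range Nx, dgA vth NH Nx X (fun m i => C m s i) 0 j 1 := by
        rw [← sum_neg_distrib]
        exact sum_congr rfl fun j hj => hcell s j (mem_range.1 hj)
    _ = 0 := by rw [sum_dgA_one_eq_zero, neg_zero]

/-- Conservation of the discrete mass for the modified semi-discrete
discontinuous Galerkin scheme: `t ↦ ∫_0^L C_0(t,x) dx` is constant. -/
theorem dg_semidiscrete_mass_conservation
    (L vth ρ0 β : ℝ) (k Nx NH : ℕ)
    (hL : 0 < L) (hvth : 0 < vth) (hβ : 0 < β) (hNx : 1 ≤ Nx) (hNH : 3 ≤ NH)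
    -- the partition `0 = x_{1/2} < … < x_{Nx+1/2} = L`
    (X : ℕ → ℝ) (hX0 : X 0 = 0) (hXL : X Nx = L)
    (hXmono : ∀ j < Nx, X j < X (j + 1))
    -- the numerical solution, cell by cell
    (C : ℕ → ℝ → ℕ → Polynomial ℝ) (E Φ : ℝ → ℕ → Polynomial ℝ)
    -- membership in `V_h^k`
    (hdegC : ∀ n t j, (C n t j).natDegree ≤ k)
    (hdegE : ∀ t j, (E t j).natDegree ≤ k)
    (hdegΦ : ∀ t j, (Φ t j).natDegree ≤ k)
    -- truncation convention `C_{N_H} = 0` (and beyond)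
    (hCtop : ∀ n, NH ≤ n → ∀ t j, C n t j = 0)
    -- C¹ regularity in time
    (hC1 : ∀ n j (φ : Polynomial ℝ),
      Differentiable ℝ fun t => cellInt X j fun x => (C n t j).eval x * φ.eval x)
    -- the modified semi-discrete DG scheme
    (hScheme : ∀ t : ℝ, ∀ n < NH, ∀ j < Nx, ∀ φ : Polynomial ℝ, φ.natDegree ≤ k →
      deriv (fun s => cellInt X j fun x => (C n s j).eval x * φ.eval x) t
        + dgA vth NH Nx X (fun m i => C m t i) n j φ
        + dgB vth β NH Nx X (fun m i => C m t i) (E t) (Φ t) n j φ = 0)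
    -- the DG Poisson solver
    (hPoisson : ∀ t : ℝ, dgPoisson vth ρ0 β k Nx X (C 0 t) (E t) (Φ t)) :
    ∀ t : ℝ, dgTotInt Nx X (C 0 t) = dgTotInt Nx X (C 0 0) :=
  dg_semidiscrete_mass_conservation_general vth β k Nx NH hNH X C E Φ hC1 hScheme
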